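/- arXiv:2309.01231 — 2 statements merged into one kernel-verified Lean document; each statement's English description precedes it below -/
import Mathlib

section
/- In the game saliquant, let p ≥ 5 be prime. If SG(p + 1) = (p − 1)/2 then SG(2p) = p − 1, and if SG(p + 1) ≠ (p − 1)/2 then SG(2p) = (p − 1)/2. -/
/-- Sprague–Grundy values for the game saliquant: the options of a position `n`
are the positions `n - k` where `1 ≤ k ≤ n` and `k` does not divide `n`, and
`sg n` is the least nonnegative integer not among the values of the options. -/
noncomputable def sg : ℕ → ℕ
  | n => sInf {m : ℕ | ∀ k, 1 ≤ k → k ≤ n → ¬ k ∣ n → sg (n - k) ≠ m}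
decreasing_by omega

lemma sg_eq (n : ℕ) :
    sg n = sInf {m : ℕ | ∀ k, 1 ≤ k → k ≤ n → ¬ k ∣ n → sg (n - k) ≠ m} := by
  rw [sg]

lemma sg_le_self : ∀ n, sg n ≤ n := by
  intro n
  induction n using Nat.strong_induction_on with
  | _ n ih =>
    rw [sg_eq]
    apply Nat.sInf_le
    intro k hk1 hkn hknd
    have := ih (n - k) (by omega)
    omega

lemma sg_set_nonempty (n : ℕ) :
    {m : ℕ | ∀ k, 1 ≤ k → k ≤ n → ¬ k ∣ n → sg (n - k) ≠ m}.Nonempty := by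
  refine ⟨n, fun k hk1 hkn hknd => ?_⟩
  have := sg_le_self (n - k)
  omega

lemma sg_move_ne (n k : ℕ) (hk1 : 1 ≤ k) (hkn : k ≤ n) (hknd : ¬ k ∣ n) :
    sg (n - k) ≠ sg n := by
  have hmem := Nat.sInf_mem (sg_set_nonempty n)
  rw [← sg_eq] at hmem
  exact hmem k hk1 hkn hknd

lemma sg_eq_of (n b : ℕ)
    (hb : ∀ k, 1 ≤ k → k ≤ n → ¬ k ∣ n → sg (n - k) ≠ b)
    (hlt : ∀ v, v < b → ∃ k, 1 ≤ k ∧ k ≤ n ∧ ¬ k ∣ n ∧ sg (n - k) = v) :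
    sg n = b := by
  rw [sg_eq]
  refine le_antisymm (Nat.sInf_le hb) ?_
  by_contra h
  push_neg at h
  obtain ⟨k, hk1, hkn, hknd, hkv⟩ := hlt _ h
  have hmem := Nat.sInf_mem (sg_set_nonempty n)
  exact hmem k hk1 hkn hknd hkv

lemma sg_parity : ∀ n, (n % 2 = 1 → 2 * sg n + 1 = n) ∧ (n % 2 = 0 → 1 ≤ n → 2 * sg n + 2 ≤ n) := by
  intro n
  induction n using Nat.strong_induction_on with
  | _ n ih =>
    constructor
    · intro hodd
      have hupper : sg n ≤ (n - 1) / 2 := by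
        rw [sg_eq]
        apply Nat.sInf_le
        intro k hk1 hkn hknd
        have hk1' : k ≠ 1 := by rintro rfl; exact hknd (one_dvd n)
        have hkn' : k ≠ n := by rintro rfl; exact hknd dvd_rfl
        have hm : n - k < n := by omega
        rcases Nat.even_or_odd (n - k) with he | ho
        · have he' : (n - k) % 2 = 0 := Nat.even_iff.mp he
          have := (ih (n - k) hm).2 he' (by omega)
          omega
        · have ho' : (n - k) % 2 = 1 := Nat.odd_iff.mp ho
          have := (ih (n - k) hm).1 ho'
          omega
      have hlower : ∀ v, v < (n - 1) / 2 → sg n ≠ v := by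
        intro v hv hne
        have hk1 : (1:ℕ) ≤ n - (2 * v + 1) := by omega
        have hknd : ¬ (n - (2 * v + 1)) ∣ n := by
          intro hd
          have h2 : 2 ∣ (n - (2 * v + 1)) := by omega
          have := h2.trans hd
          omega
        have hmove := sg_move_ne n (n - (2 * v + 1)) hk1 (by omega) hknd
        have hsub : n - (n - (2 * v + 1)) = 2 * v + 1 := by omega
        rw [hsub] at hmove
        have := (ih (2 * v + 1) (by omega)).1 (by omega)
        omega
      have : ¬ sg n < (n - 1) / 2 := fun h => hlower _ h rfl
      omega
    · intro heven h1
      have : sg n ≤ n / 2 - 1 := by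
        rw [sg_eq]
        apply Nat.sInf_le
        intro k hk1 hkn hknd
        have hk1' : k ≠ 1 := by rintro rfl; exact hknd (one_dvd n)
        have hk2' : k ≠ 2 := by rintro rfl; exact hknd (by omega)
        have hkn' : k ≠ n := by rintro rfl; exact hknd dvd_rfl
        have hm : n - k < n := by omega
        rcases Nat.even_or_odd (n - k) with he | ho
        · have he' : (n - k) % 2 = 0 := Nat.even_iff.mp he
          have := (ih (n - k) hm).2 he' (by omega)
          omega
        · have ho' : (n - k) % 2 = 1 := Nat.odd_iff.mp ho
          have := (ih (n - k) hm).1 ho'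
          omega
      omega

lemma sg_odd (n : ℕ) (h : n % 2 = 1) : 2 * sg n + 1 = n := (sg_parity n).1 h

lemma sg_even (n : ℕ) (h : n % 2 = 0) (h1 : 1 ≤ n) : 2 * sg n + 2 ≤ n := (sg_parity n).2 h h1

theorem saliquant_double_prime_dichotomy (p : ℕ) (hp : p.Prime) (hp5 : 5 ≤ p) :
    (sg (p + 1) = (p - 1) / 2 → sg (2 * p) = p - 1) ∧
    (sg (p + 1) ≠ (p - 1) / 2 → sg (2 * p) = (p - 1) / 2) := by
  have hpodd : p % 2 = 1 := by
    rcases hp.eq_two_or_odd with h | h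
    · omega
    · exact h
  -- odd divisors of 2p are 1 and p
  have hodd_dvd : ∀ k, k ∣ 2 * p → k % 2 = 1 → k = 1 ∨ k = p := by
    intro k hdvd hk
    have hcop : Nat.Coprime k 2 := Nat.coprime_two_right.mpr (Nat.odd_iff.mpr hk)
    have hkp : k ∣ p := hcop.dvd_of_dvd_mul_left hdvd
    exact (Nat.Prime.eq_one_or_self_of_dvd hp k hkp)
  have hp1 : ¬ (p - 1) ∣ 2 * p := by
    intro h
    have h2 : (p - 1) ∣ 2 * (p - 1) := ⟨2, by ring⟩
    have h3 : (p - 1) ∣ 2 * p - 2 * (p - 1) := Nat.dvd_sub h h2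
    have h4 : 2 * p - 2 * (p - 1) = 2 := by omega
    rw [h4] at h3
    have := Nat.le_of_dvd (by omega) h3
    omega
  -- facts about legal moves from 2p
  have hlegal : ∀ k, 1 ≤ k → k ≤ 2 * p → ¬ k ∣ 2 * p →
      1 ≤ 2 * p - k ∧ 2 * p - k ≤ 2 * p - 3 ∧ 2 * p - k ≠ p := by
    intro k hk1 hkn hknd
    have h1 : k ≠ 1 := by rintro rfl; exact hknd (one_dvd _)
    have h2 : k ≠ 2 := by rintro rfl; exact hknd ⟨p, rfl⟩
    have h3 : k ≠ p := by rintro rfl; exact hknd ⟨2, by ring⟩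
    have h4 : k ≠ 2 * p := by rintro rfl; exact hknd dvd_rfl
    omega
  -- reach values v < p - 1, v ≠ (p-1)/2, via odd positions
  have hreach : ∀ v, v < p - 1 → v ≠ (p - 1) / 2 →
      ∃ k, 1 ≤ k ∧ k ≤ 2 * p ∧ ¬ k ∣ 2 * p ∧ sg (2 * p - k) = v := by
    intro v hv hvt
    refine ⟨2 * p - (2 * v + 1), by omega, by omega, ?_, ?_⟩
    · intro hd
      rcases hodd_dvd _ hd (by omega) with h | h <;> omega
    · have hsub : 2 * p - (2 * p - (2 * v + 1)) = 2 * v + 1 := by omega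
      rw [hsub]
      have := sg_odd (2 * v + 1) (by omega)
      omega
  constructor
  · -- case sg (p+1) = (p-1)/2 : sg (2p) = p - 1
    intro h
    apply sg_eq_of
    · intro k hk1 hkn hknd
      obtain ⟨hm1, hm2, hm3⟩ := hlegal k hk1 hkn hknd
      rcases Nat.even_or_odd (2 * p - k) with he | ho
      · have := sg_even (2 * p - k) (Nat.even_iff.mp he) hm1
        omega
      · have := sg_odd (2 * p - k) (Nat.odd_iff.mp ho)
        omega
    · intro v hv
      rcases eq_or_ne v ((p - 1) / 2) with rfl | hvt
      · refine ⟨p - 1, by omega, by omega, hp1, ?_⟩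
        have hsub : 2 * p - (p - 1) = p + 1 := by omega
        rw [hsub, h]
      · exact hreach v (by omega) hvt
  · -- case sg (p+1) ≠ (p-1)/2 : sg (2p) = (p-1)/2
    intro h
    apply sg_eq_of
    · intro k hk1 hkn hknd
      obtain ⟨hm1, hm2, hm3⟩ := hlegal k hk1 hkn hknd
      set m := 2 * p - k with hm
      rcases Nat.even_or_odd m with he | ho
      · -- even m
        have hme : m % 2 = 0 := Nat.even_iff.mp he
        have hbd := sg_even m hme hm1
        rcases lt_trichotomy m (p + 1) with hlt | heq | hgt
        · -- m ≤ p - 1 (m even, p odd)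
          omega
        · rw [heq]; exact h
        · -- p + 1 < m : move from m to p
          have hj1 : 1 ≤ m - p := by omega
          have hjd : ¬ (m - p) ∣ m := by
            intro hd
            have hdp : (m - p) ∣ p := by
              have : (m - p) ∣ (m - (m - p)) := Nat.dvd_sub hd dvd_rfl
              have hsub : m - (m - p) = p := by omega
              rwa [hsub] at this
            rcases (Nat.Prime.eq_one_or_self_of_dvd hp _ hdp) with h' | h' <;> omega
          have hmove := sg_move_ne m (m - p) hj1 (by omega) hjd
          have hsub : m - (m - p) = p := by omega
          rw [hsub] at hmove
          have hsgp := sg_odd p hpodd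
          omega
      · -- odd m, m ≠ p, so sg m = (m-1)/2 ≠ (p-1)/2
        have := sg_odd m (Nat.odd_iff.mp ho)
        omega
    · intro v hv
      exact hreach v (by omega) (by omega)
end

section
/- In the game saliquant, for all integers a ≥ 0 and b ≥ 1, there exists a (necessarily odd) positive divisor d of 2a + 1 such that SG((2a + 1)·2^b) = (2a + 1)·2^(b−1) − (d + 1)/2; equivalently, 2·SG((2a + 1)·2^b) = (2a + 1)·2^b − (d + 1). -/
lemma sg_le (n : ℕ) : sg n ≤ n := by
  induction n using Nat.strong_induction_on with
  | _ n ih =>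
    rw [sg_eq]
    apply Nat.sInf_le
    intro k hk1 hkn _
    have h1 : n - k < n := by omega
    have := ih (n - k) h1
    omega

lemma sg_mem (n : ℕ) :
    ∀ k, 1 ≤ k → k ≤ n → ¬ k ∣ n → sg (n - k) ≠ sg n := by
  have hne : Set.Nonempty {m : ℕ | ∀ k, 1 ≤ k → k ≤ n → ¬ k ∣ n → sg (n - k) ≠ m} := by
    refine ⟨n, ?_⟩
    intro k hk1 hkn _
    have := sg_le (n - k)
    omega
  have := Nat.sInf_mem hne
  rw [← sg_eq] at this
  exact this

lemma sg_main (n : ℕ) :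
    (n % 2 = 1 → 2 * sg n + 1 = n) ∧ (n % 2 = 0 → 2 ≤ n → 2 * sg n + 2 ≤ n) := by
  induction n using Nat.strong_induction_on with
  | _ n ih =>
    constructor
    · -- odd case
      intro hodd
      have hv : (n / 2) ∈ {m : ℕ | ∀ k, 1 ≤ k → k ≤ n → ¬ k ∣ n → sg (n - k) ≠ m} := by
        intro k hk1 hkn hknd
        rcases Nat.even_or_odd k with hke | hko
        · -- k even, n - k odd
          have hke' : k % 2 = 0 := Nat.even_iff.mp hke
          have hlt : n - k < n := by omega
          have := (ih (n - k) hlt).1 (by omega)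
          omega
        · -- k odd, k ≥ 3, n - k even ≥ 2
          have hko' : k % 2 = 1 := Nat.odd_iff.mp hko
          have hk1' : k ≠ 1 := by rintro rfl; exact hknd (one_dvd n)
          have hkn' : k ≠ n := by rintro rfl; exact hknd dvd_rfl
          have hlt : n - k < n := by omega
          have := (ih (n - k) hlt).2 (by omega) (by omega)
          omega
      have hle : sg n ≤ n / 2 := by
        rw [sg_eq]; exact Nat.sInf_le hv
      -- show sg n = n / 2
      rcases Nat.lt_or_ge (sg n) (n / 2) with hlt | _
      · exfalso
        set s := sg n with hs
        have hodd' : (2 * s + 1) % 2 = 1 := by omega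
        have hlt2 : 2 * s + 1 < n := by omega
        have hsg : 2 * sg (2 * s + 1) + 1 = 2 * s + 1 := (ih _ hlt2).1 hodd'
        have hk : n - (n - (2 * s + 1)) = 2 * s + 1 := by omega
        have := sg_mem n (n - (2 * s + 1)) (by omega) (by omega) ?_
        · rw [hk] at this
          omega
        · intro hdvd
          have h2 : (n - (2 * s + 1)) % 2 = 0 := by omega
          have : (2:ℕ) ∣ n := dvd_trans (by omega : (2:ℕ) ∣ (n - (2 * s + 1))) hdvd
          omega
      · omega
    · -- even case
      intro heven h2
      have hv : (n / 2 - 1) ∈ {m : ℕ | ∀ k, 1 ≤ k → k ≤ n → ¬ k ∣ n → sg (n - k) ≠ m} := by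
        intro k hk1 hkn hknd
        rcases Nat.even_or_odd k with hke | hko
        · -- k even ≥ 2, n - k even ≥ 2
          have hke' : k % 2 = 0 := Nat.even_iff.mp hke
          have hkn' : k ≠ n := by rintro rfl; exact hknd dvd_rfl
          have hlt : n - k < n := by omega
          have := (ih (n - k) hlt).2 (by omega) (by omega)
          omega
        · -- k odd ≥ 3, n - k odd
          have hko' : k % 2 = 1 := Nat.odd_iff.mp hko
          have hk1' : k ≠ 1 := by rintro rfl; exact hknd (one_dvd n)
          have hkn' : k ≠ n := by rintro rfl; exact hknd dvd_rfl
          have hlt : n - k < n := by omega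
          have := (ih (n - k) hlt).1 (by omega)
          omega
      have hle : sg n ≤ n / 2 - 1 := by
        rw [sg_eq]; exact Nat.sInf_le hv
      omega

theorem saliquant_fundamental (a b : ℕ) (hb : 1 ≤ b) :
    ∃ d : ℕ, 0 < d ∧ d ∣ (2 * a + 1) ∧
      2 * sg ((2 * a + 1) * 2 ^ b) + (d + 1) = (2 * a + 1) * 2 ^ b := by
  set n := (2 * a + 1) * 2 ^ b with hn
  have h2dvd : (2:ℕ) ∣ n := by
    refine Dvd.dvd.mul_left ?_ _
    exact dvd_pow_self 2 (by omega)
  have h2 : 2 ≤ n := by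
    have : 0 < n := by positivity
    omega
  have heven : n % 2 = 0 := Nat.eq_zero_of_dvd_of_lt h2dvd |> fun _ => Nat.mod_eq_zero_of_dvd h2dvd
  have hbound : 2 * sg n + 2 ≤ n := (sg_main n).2 heven h2
  set s := sg n with hs
  set d := n - (2 * s + 1) with hd
  have hd1 : 1 ≤ d := by omega
  have hdodd : d % 2 = 1 := by omega
  have hddvd : d ∣ n := by
    by_contra hnd
    have hk : n - d = 2 * s + 1 := by omega
    have hlem := sg_mem n d hd1 (by omega) hnd
    rw [hk] at hlem
    have : 2 * sg (2 * s + 1) + 1 = 2 * s + 1 := (sg_main _).1 (by omega)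
    omega
  refine ⟨d, by omega, ?_, by omega⟩
  have hc2 : Nat.Coprime d 2 :=
    Nat.Coprime.symm ((Nat.Prime.coprime_iff_not_dvd Nat.prime_two).mpr (by omega))
  have hcop : Nat.Coprime d (2 ^ b) := Nat.Coprime.pow_right b hc2
  exact hcop.dvd_of_dvd_mul_right (hn ▸ hddvd)
end
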